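/- Let m ≥ 2 and k be integers with 1 ≤ k ≤ m/2, and let X = {x ∈ S^m : 0 ⪯ x ⪯ I_m, Tr(x) = k}. If x ∈ S^m satisfies Tr(x) = 0, ‖λ(x)‖_∞ ≤ 1/2 and ‖λ(x)‖_1 ≤ k/2, then there exist x⁺, x⁻ ∈ X such that x = ½(x⁺ − x⁻). -/

import Mathlib

open Matrix Unitary

/-! Diagonalize `x = U diag(λ) U*`. As `∑ λᵢ = 0`, both `2λ⁺` and `2λ⁻` have sum `‖λ‖₁ ≤ k` and
entries at most `2|λᵢ| ≤ 1`. Adding to both one vector `c` with `0 ≤ cᵢ ≤ 1 - 2|λᵢ|` and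
`∑ cᵢ = k - ‖λ‖₁` (there is room for it: `∑ (1 - 2|λᵢ|) = m - 2‖λ‖₁ ≥ k - ‖λ‖₁` because
`‖λ‖₁ ≤ k/2 ≤ m/4`) gives vectors `p`, `q` in the hypersimplex `{d ∈ [0,1]^m | ∑ dᵢ = k}` with
`p - q = 2λ`; then `x± = U diag(p) U*` and `U diag(q) U*` lie in `X`. -/

def hypersimplex (ι : Type*) [Fintype ι] (k : ℝ) : Set (ι → ℝ) :=
  {d | (∀ i, d i ∈ Set.Icc 0 1) ∧ ∑ i, d i = k}

def fantope (n : Type*) [Fintype n] [DecidableEq n] (k : ℝ) : Set (Matrix n n ℝ) :=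
  {x | x.IsHermitian ∧ x.PosSemidef ∧ (1 - x).PosSemidef ∧ x.trace = k}

section Hypersimplex

variable {ι : Type*} [Fintype ι]

theorem exists_le_sum_eq {w : ι → ℝ} (hw : ∀ i, 0 ≤ w i) {s : ℝ} (hs₀ : 0 ≤ s)
    (hs : s ≤ ∑ i, w i) : ∃ c : ι → ℝ, (∀ i, c i ∈ Set.Icc 0 (w i)) ∧ ∑ i, c i = s := by
  have hW : 0 ≤ ∑ i, w i := hs₀.trans hs
  refine ⟨fun i ↦ s / (∑ j, w j) * w i, fun i ↦ ⟨by have := hw i; positivity, ?_⟩, ?_⟩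
  · exact mul_le_of_le_one_left (hw i) (div_le_one_of_le₀ hs hW)
  · rw [← Finset.mul_sum]
    exact div_mul_cancel_of_imp fun h ↦ by linarith

theorem two_mul_sum_posPart_of_sum_eq_zero {l : ι → ℝ} (hl : ∑ i, l i = 0) :
    2 * ∑ i, (l i)⁺ = ∑ i, |l i| := by
  have hsub : ∑ i, (l i)⁺ - ∑ i, (l i)⁻ = 0 := by
    simp only [← Finset.sum_sub_distrib, posPart_sub_negPart, hl]
  have hadd : ∑ i, (l i)⁺ + ∑ i, (l i)⁻ = ∑ i, |l i| := by
    simp only [← Finset.sum_add_distrib, posPart_add_negPart]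
  linarith

theorem two_mul_posPart_add_mem_hypersimplex {l c : ι → ℝ} {k : ℝ} (hl : ∑ i, l i = 0)
    (hc : ∀ i, c i ∈ Set.Icc 0 (1 - 2 * |l i|)) (hc_sum : ∑ i, c i = k - ∑ i, |l i|) :
    (fun i ↦ 2 * (l i)⁺ + c i) ∈ hypersimplex ι k := by
  refine ⟨fun i ↦ ⟨?_, ?_⟩, ?_⟩
  · linarith [posPart_nonneg (l i), (hc i).1]
  · linarith [posPart_add_negPart (l i), negPart_nonneg (l i), (hc i).2]
  · rw [Finset.sum_add_distrib, ← Finset.mul_sum, two_mul_sum_posPart_of_sum_eq_zero hl, hc_sum]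
    ring

theorem exists_mem_hypersimplex_eq_half_sub {l : ι → ℝ} {k : ℝ} (hl : ∑ i, l i = 0)
    (hl_le : ∀ i, |l i| ≤ 1 / 2) (hl_sum : ∑ i, |l i| ≤ k / 2)
    (hk : 2 * k ≤ Fintype.card ι) :
    ∃ p ∈ hypersimplex ι k, ∃ q ∈ hypersimplex ι k, l = (2⁻¹ : ℝ) • (p - q) := by
  have hS₀ : 0 ≤ ∑ i, |l i| := Finset.sum_nonneg fun i _ ↦ abs_nonneg _
  obtain ⟨c, hc, hc_sum⟩ := exists_le_sum_eq (w := fun i ↦ 1 - 2 * |l i|)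
    (fun i ↦ by linarith [hl_le i]) (s := k - ∑ i, |l i|) (by linarith) (by
      simp only [Finset.sum_sub_distrib, ← Finset.mul_sum, Finset.sum_const, Finset.card_univ,
        nsmul_eq_mul, mul_one]
      linarith)
  have hneg : ∑ i, -l i = 0 := by rw [Finset.sum_neg_distrib, hl, neg_zero]
  refine ⟨_, two_mul_posPart_add_mem_hypersimplex hl hc hc_sum,
    _, two_mul_posPart_add_mem_hypersimplex hneg (by simpa only [abs_neg] using hc)
      (by simpa only [abs_neg] using hc_sum), ?_⟩
  ext i
  simp only [Pi.smul_apply, Pi.sub_apply, smul_eq_mul, posPart_neg]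
  linarith [posPart_sub_negPart (l i)]

end Hypersimplex

section Fantope

variable {n : Type*} [Fintype n] [DecidableEq n]

theorem Matrix.trace_conjStarAlgAut {R : Type*} [CommRing R] [StarRing R]
    (U : unitary (Matrix n n R)) (A : Matrix n n R) :
    (conjStarAlgAut R _ U A).trace = A.trace := by
  rw [conjStarAlgAut_apply, trace_mul_cycle, coe_star_mul_self, one_mul]

theorem Matrix.PosSemidef.conjStarAlgAut {R : Type*} [CommRing R] [PartialOrder R] [StarRing R]
    [StarOrderedRing R] {A : Matrix n n R} (hA : A.PosSemidef) (U : unitary (Matrix n n R)) :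
    (conjStarAlgAut R _ U A).PosSemidef := by
  rw [conjStarAlgAut_apply, star_eq_conjTranspose]
  exact hA.mul_mul_conjTranspose_same _

theorem conjStarAlgAut_diagonal_mem_fantope {k : ℝ} {d : n → ℝ} (hd : d ∈ hypersimplex n k)
    (U : unitary (Matrix n n ℝ)) : conjStarAlgAut ℝ _ U (diagonal d) ∈ fantope n k := by
  have hpsd := (posSemidef_diagonal_iff.mpr fun i ↦ (hd.1 i).1).conjStarAlgAut U
  refine ⟨hpsd.isHermitian, hpsd, ?_, ?_⟩
  · rw [← map_one (conjStarAlgAut ℝ _ U), ← map_sub, ← diagonal_one, diagonal_sub]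
    exact (posSemidef_diagonal_iff.mpr fun i ↦ sub_nonneg.mpr (hd.1 i).2).conjStarAlgAut U
  · rw [trace_conjStarAlgAut, trace_diagonal, hd.2]

end Fantope

theorem stmt_18_general (m k : ℕ) (hk2 : 2 * k ≤ m)
    (X : Set (Matrix (Fin m) (Fin m) ℝ))
    (hX : X = {x | x.IsHermitian ∧ x.PosSemidef ∧ ((1 : Matrix (Fin m) (Fin m) ℝ) - x).PosSemidef ∧
      x.trace = (k : ℝ)})
    (x : Matrix (Fin m) (Fin m) ℝ) (hx : x.IsHermitian)
    (htr : x.trace = 0)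
    (hinf : ∀ i, |hx.eigenvalues i| ≤ 1 / 2)
    (h1 : ∑ i, |hx.eigenvalues i| ≤ (k : ℝ) / 2) :
    ∃ xp ∈ X, ∃ xm ∈ X, x = (2⁻¹ : ℝ) • (xp - xm) := by
  have hsum : ∑ i, hx.eigenvalues i = 0 := by
    simpa [hx.trace_eq_sum_eigenvalues] using htr
  obtain ⟨p, hp, q, hq, hpq⟩ := exists_mem_hypersimplex_eq_half_sub hsum hinf h1
    (by simpa using (Nat.cast_le.mpr hk2 : ((2 * k : ℕ) : ℝ) ≤ m))
  subst hX
  refine ⟨_, conjStarAlgAut_diagonal_mem_fantope hp hx.eigenvectorUnitary,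
    _, conjStarAlgAut_diagonal_mem_fantope hq hx.eigenvectorUnitary, ?_⟩
  conv_lhs => rw [hx.spectral_theorem]
  rw [← map_sub, ← map_smul, diagonal_sub, ← diagonal_smul, hpq]
  rfl -- `RCLike.ofReal : ℝ → ℝ` is the identity

/-- Let `m ≥ 2`, `1 ≤ k ≤ m/2`, and
`X = {x ∈ S^m : 0 ⪯ x ⪯ I, Tr(x) = k}`. If a symmetric matrix `x` satisfies `Tr(x) = 0`,
`‖λ(x)‖_∞ ≤ 1/2` and `‖λ(x)‖_1 ≤ k/2`, then `x = ½(x⁺ − x⁻)` for some `x⁺, x⁻ ∈ X`. -/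
theorem stmt_18 (m k : ℕ) (hm : 2 ≤ m) (hk1 : 1 ≤ k) (hk2 : 2 * k ≤ m)
    (X : Set (Matrix (Fin m) (Fin m) ℝ))
    (hX : X = {x | x.IsHermitian ∧ x.PosSemidef ∧ ((1 : Matrix (Fin m) (Fin m) ℝ) - x).PosSemidef ∧
      x.trace = (k : ℝ)})
    (x : Matrix (Fin m) (Fin m) ℝ) (hx : x.IsHermitian)
    (htr : x.trace = 0)
    (hinf : ∀ i, |hx.eigenvalues i| ≤ 1 / 2)
    (h1 : ∑ i, |hx.eigenvalues i| ≤ (k : ℝ) / 2) :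
    ∃ xp ∈ X, ∃ xm ∈ X, x = (2⁻¹ : ℝ) • (xp - xm) :=
  stmt_18_general m k hk2 X hX x hx htr hinf h1
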